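/- Let the additive group $\mathbb{R}^n$ act smoothly and transitively on a connected manifold $M$ of dimension $n$ such that the infinitesimal generators are linearly independent at every point. Then the isotropy group $K$ of any point is a discrete subgroup of $\mathbb{R}^n$, hence isomorphic to $\mathbb{Z}^m$ for some $0 \le m \le n$, and $M$ is diffeomorphic to $\mathbb{R}^n / K \cong \mathbb{R}^{n-m} \times T^m$. -/

import Mathlib

/-!
By the inverse function theorem in a chart, each orbit map `s ↦ s +ᵥ x` is a local homeomorphism
at `0`, hence everywhere by equivariance. So it is an open quotient map whose fibres are the
cosets of the stabilizer `K`, and `K` is discrete. A `ℤ`-basis of the discrete group `K` is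
`ℝ`-linearly independent (for discrete subgroups `ℤ`-rank and `ℝ`-rank agree); completing its span
by a complement gives linear coordinates on `ℝⁿ` in which `K = 0 × ℤᵐ`, and then
`ℝⁿ⁻ᵐ × ℝᵐ → ℝⁿ⁻ᵐ × Tᵐ` is an open quotient map with the same fibres as the orbit map.
-/

open scoped Manifold
open Set Function Module Submodule Topology

theorem isLocalHomeomorphOn_singleton_of_injective_mfderiv
    {E F M : Type*} [NormedAddCommGroup E] [NormedSpace ℝ E] [FiniteDimensional ℝ E]
    [NormedAddCommGroup F] [NormedSpace ℝ F] [FiniteDimensional ℝ F]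
    [TopologicalSpace M] [ChartedSpace F M] (hEF : finrank ℝ E = finrank ℝ F)
    {θ : E → M} {a : E} (hθ : ContMDiffAt 𝓘(ℝ, E) 𝓘(ℝ, F) 1 θ a)
    (hinj : Injective (mfderiv 𝓘(ℝ, E) 𝓘(ℝ, F) θ a)) :
    IsLocalHomeomorphOn θ {a} := by
  set c := chartAt F (θ a)
  obtain ⟨hθc, hg⟩ := contMDiffAt_iff_target.mp hθ
  simp only [extChartAt_coe, modelWithCornersSelf_coe, id_comp, contMDiffAt_iff_contDiffAt] at hg
  have hderiv : fderiv ℝ (c ∘ θ) a = mfderiv 𝓘(ℝ, E) 𝓘(ℝ, F) θ a := by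
    rw [(hθ.mdifferentiableAt one_ne_zero).mfderiv]
    simp [writtenInExtChartAt, c, chartAt_self_eq]
  set d := (LinearMap.linearEquivOfInjective (fderiv ℝ (c ∘ θ) a : E →ₗ[ℝ] F)
    (hderiv ▸ hinj) hEF).toContinuousLinearEquiv
  have hstrict : HasStrictFDerivAt (c ∘ θ) (d : E →L[ℝ] F) a := by
    convert hg.hasStrictFDerivAt one_ne_zero
    ext v; rfl
  have hsrc : θ ⁻¹' c.source ∈ 𝓝 a :=
    hθc.preimage_mem_nhds (c.open_source.mem_nhds (mem_chart_source F (θ a)))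
  refine IsLocalHomeomorphOn.mk θ {a} fun x hx ↦ ?_
  obtain rfl : x = a := hx
  refine ⟨(hstrict.toOpenPartialHomeomorph _).restr (θ ⁻¹' c.source) ≫ₕ c.symm, ?_, ?_⟩
  · exact ⟨⟨hstrict.mem_toOpenPartialHomeomorph_source, mem_interior_iff_mem_nhds.mpr hsrc⟩,
      c.map_source (mem_chart_source F (θ x))⟩
  · rintro t ⟨⟨-, ht⟩, -⟩
    simp [c.left_inv (interior_subset (s := θ ⁻¹' c.source) ht)]

namespace AddAction

theorem vadd_eq_vadd_iff_sub_mem_stabilizer {G X : Type*} [AddCommGroup G] [AddAction G X]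
    {a b : G} {x : X} : a +ᵥ x = b +ᵥ x ↔ a - b ∈ stabilizer G x := by
  rw [mem_stabilizer_iff, sub_eq_neg_add, ← vadd_vadd, neg_vadd_eq_iff]

variable {G X : Type*} [AddGroup G] [TopologicalSpace G] [TopologicalSpace X] [AddAction G X]

theorem isLocalHomeomorph_vadd_right [IsTopologicalAddGroup G]
    (h : ∀ x : X, IsLocalHomeomorphOn (· +ᵥ x : G → X) {0}) (x : X) :
    IsLocalHomeomorph (· +ᵥ x : G → X) := by
  refine isLocalHomeomorph_iff_isLocalHomeomorphOn_univ.mpr fun s _ ↦ ?_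
  have hcomp : (· +ᵥ x : G → X) = (· +ᵥ (s +ᵥ x)) ∘ (· - s) := by
    ext t; simp [vadd_vadd]
  rw [hcomp]
  refine ((h (s +ᵥ x)).comp (Homeomorph.subRight s).isLocalHomeomorph.isLocalHomeomorphOn
    (s := {s}) ?_) s rfl
  simp [MapsTo]

theorem discreteTopology_stabilizer {x : X} (hx : IsLocalHomeomorph (· +ᵥ x : G → X)) :
    DiscreteTopology (stabilizer G x) := by
  have : Subsingleton ((· +ᵥ x : G → X) '' stabilizer G x) :=
    (subsingleton_singleton.anti (image_subset_iff.mpr fun _ ↦ id)).coe_sort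
  exact (hx.isLocalHomeomorphOn.mono (subset_univ _)).discreteTopology_of_image

end AddAction

noncomputable def Topology.IsQuotientMap.homeomorphOfFiberEq {X Y Z : Type*} [TopologicalSpace X]
    [TopologicalSpace Y] [TopologicalSpace Z] {f : X → Y} {g : X → Z} (hf : IsQuotientMap f)
    (hg : IsQuotientMap g) (hfg : ∀ a b, f a = f b ↔ g a = g b) : Y ≃ₜ Z :=
  have hker : Setoid.ker f = Setoid.ker g := Setoid.ext hfg
  (hf.homeomorph (f := ⟨f, hf.continuous⟩)).symm.trans
    (hker ▸ hg.homeomorph (f := ⟨g, hg.continuous⟩))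

def torusProj (k m : ℕ) :
    (Fin k → ℝ) × (Fin m → ℝ) → (Fin k → ℝ) × (Fin m → AddCircle (1 : ℝ)) :=
  Prod.map id fun v i ↦ v i

theorem isOpenQuotientMap_torusProj (k m : ℕ) : IsOpenQuotientMap (torusProj k m) :=
  IsOpenQuotientMap.id.prodMap
    (IsOpenQuotientMap.piMap fun _ ↦ QuotientAddGroup.isOpenQuotientMap_mk)

theorem torusProj_eq_torusProj_iff {k m : ℕ} {p q : (Fin k → ℝ) × (Fin m → ℝ)} :
    torusProj k m p = torusProj k m q ↔
      (p - q).1 = 0 ∧ ∀ i, ∃ z : ℤ, (p - q).2 i = z := by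
  simp only [torusProj, Prod.map, id, Prod.ext_iff, funext_iff, Prod.fst_sub, Prod.snd_sub,
    Pi.sub_apply, sub_eq_zero, ← sub_eq_zero (a := ((p.2 _ : ℝ) : AddCircle (1 : ℝ))),
    ← AddCircle.coe_sub, AddCircle.coe_eq_zero_iff, zsmul_one, eq_comm (a := ((_ : ℤ) : ℝ))]

theorem AddSubgroup.exists_linearIndependent_span_eq {E : Type*} [NormedAddCommGroup E]
    [NormedSpace ℝ E] [FiniteDimensional ℝ E] (K : AddSubgroup E) [DiscreteTopology K] :
    ∃ (m : ℕ) (b : Fin m → E),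
      LinearIndependent ℝ b ∧ span ℤ (range b) = K.toIntSubmodule := by
  set L := K.toIntSubmodule
  have : DiscreteTopology L := ‹DiscreteTopology K›
  set bL := Module.finBasis ℤ L
  have hspan : span ℤ (range (L.subtype ∘ bL)) = L := by
    rw [range_comp, ← Submodule.map_span, bL.span_eq, Submodule.map_top, Submodule.range_subtype]
  refine ⟨_, _, ?_, hspan⟩
  have hdisc : DiscreteTopology (span ℤ (range (L.subtype ∘ bL))) := by rwa [hspan]
  rw [linearIndependent_iff_card_eq_finrank_span, Real.finrank_eq_int_finrank_of_discrete hdisc,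
    Set.finrank, hspan, Fintype.card_fin]

noncomputable def AddSubgroup.addEquivOfLinearIndependent {E : Type*} [AddCommGroup E]
    [Module ℝ E] {K : AddSubgroup E} {m : ℕ} {b : Fin m → E} (hb : LinearIndependent ℝ b)
    (hK : span ℤ (range b) = K.toIntSubmodule) : K ≃+ (Fin m → ℤ) :=
  ((LinearEquiv.ofEq _ _ hK.symm).trans
    (Basis.span (hb.restrict_scalars' ℤ)).equivFun).toAddEquiv

theorem LinearIndependent.sum_smul_mem_span_int_iff {E ι : Type*} [Fintype ι] [AddCommGroup E]
    [Module ℝ E] {b : ι → E} (hb : LinearIndependent ℝ b) (v : ι → ℝ) :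
    ∑ i, v i • b i ∈ span ℤ (range b) ↔ ∀ i, ∃ z : ℤ, v i = z := by
  rw [mem_span_range_iff_exists_fun]
  constructor
  · rintro ⟨z, hz⟩ i
    simp_rw [← Int.cast_smul_eq_zsmul ℝ] at hz
    exact ⟨z i, (Fintype.linearIndependent_iffₛ.mp hb _ _ hz i).symm⟩
  · intro hv
    choose z hz using hv
    exact ⟨z, by simp [hz, Int.cast_smul_eq_zsmul]⟩

theorem LinearIndependent.exists_linearEquiv_prod_mem_span_int_iff {E : Type*} [AddCommGroup E]
    [Module ℝ E] [FiniteDimensional ℝ E] {n m : ℕ} (hn : finrank ℝ E = n) {b : Fin m → E}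
    (hb : LinearIndependent ℝ b) :
    ∃ e : ((Fin (n - m) → ℝ) × (Fin m → ℝ)) ≃ₗ[ℝ] E,
      ∀ p, e p ∈ span ℤ (range b) ↔ p.1 = 0 ∧ ∀ i, ∃ z : ℤ, p.2 i = z := by
  set V := span ℝ (range b)
  obtain ⟨W, hW⟩ := V.exists_isCompl
  have hWrank : finrank ℝ W = n - m := by
    have := Submodule.finrank_add_eq_of_isCompl hW
    rw [finrank_span_eq_card hb, Fintype.card_fin] at this
    omega
  set bW := (finBasis ℝ W).reindex (finCongr hWrank)
  set bV := Basis.span hb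
  set e := (bW.equivFun.symm.prodCongr bV.equivFun.symm).trans (prodEquivOfIsCompl W V hW.symm)
  have he : ∀ p, e p = (bW.equivFun.symm p.1 : E) + ∑ i, p.2 i • b i := by
    intro p
    simp [e, bV, coe_prodEquivOfIsCompl', Basis.equivFun_symm_apply, Basis.span_apply]
  have heV : ∀ p, e p ∈ V ↔ p.1 = 0 := by
    intro p
    rw [← prodEquivOfIsCompl_symm_apply_fst_eq_zero W V hW.symm]
    simp only [e, LinearEquiv.trans_apply, LinearEquiv.symm_apply_apply,
      LinearEquiv.prodCongr_apply, LinearEquiv.map_eq_zero_iff]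
  refine ⟨e, fun p ↦ ⟨fun hp ↦ ?_, fun ⟨hp₁, hp₂⟩ ↦ ?_⟩⟩
  · have h₁ : p.1 = 0 := (heV p).mp (span_le_restrictScalars ℤ ℝ _ hp)
    rw [he, h₁, map_zero, ZeroMemClass.coe_zero, zero_add] at hp
    exact ⟨h₁, (hb.sum_smul_mem_span_int_iff p.2).mp hp⟩
  · rw [he, hp₁]
    simpa using (hb.sum_smul_mem_span_int_iff p.2).mpr hp₂

theorem stmt_4_general (n : ℕ) {M : Type*} [TopologicalSpace M]
    [ChartedSpace (EuclideanSpace ℝ (Fin n)) M]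
    (Φ : (Fin n → ℝ) → M → M)
    (hzero : ∀ x, Φ 0 x = x)
    (hadd : ∀ s t x, Φ (s + t) x = Φ s (Φ t x))
    (hsmooth : ContMDiff ((𝓘(ℝ, Fin n → ℝ)).prod (𝓡 n)) (𝓡 n) (⊤ : ℕ∞)
      fun p : (Fin n → ℝ) × M => Φ p.1 p.2)
    (htrans : ∀ x y : M, ∃ s, Φ s x = y)
    -- the infinitesimal generators are linearly independent at every point:
    -- each orbit map is immersive at `0`
    (hfree : ∀ x : M, Function.Injective
      (mfderiv 𝓘(ℝ, Fin n → ℝ) (𝓡 n) (fun s => Φ s x) 0)) :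
    ∀ x : M, ∃ (K : AddSubgroup (Fin n → ℝ)) (m : ℕ),
      m ≤ n ∧
      (K : Set (Fin n → ℝ)) = {s | Φ s x = x} ∧
      DiscreteTopology K ∧
      Nonempty (K ≃+ (Fin m → ℤ)) ∧
      Nonempty (M ≃ₜ ((Fin (n - m) → ℝ) × (Fin m → AddCircle (1 : ℝ)))) := by
  intro x
  let _ : AddAction (Fin n → ℝ) M := { vadd := Φ, zero_vadd := hzero, add_vadd := hadd }
  have horbit : ∀ y : M, ContMDiff 𝓘(ℝ, Fin n → ℝ) (𝓡 n) 1 (· +ᵥ y) := fun y ↦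
    (hsmooth.comp (contMDiff_id.prodMk contMDiff_const)).of_le (by simp)
  have hloc : ∀ y : M, IsLocalHomeomorph (· +ᵥ y : (Fin n → ℝ) → M) :=
    AddAction.isLocalHomeomorph_vadd_right fun y ↦
      isLocalHomeomorphOn_singleton_of_injective_mfderiv (by simp) (horbit y 0) (hfree y)
  set K := AddAction.stabilizer (Fin n → ℝ) x
  have hK : DiscreteTopology K := AddAction.discreteTopology_stabilizer (hloc x)
  obtain ⟨m, b, hb, hspan⟩ := K.exists_linearIndependent_span_eq
  obtain ⟨e, he⟩ := hb.exists_linearEquiv_prod_mem_span_int_iff (finrank_fin_fun ℝ)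
  have hθ : IsOpenQuotientMap (· +ᵥ x : (Fin n → ℝ) → M) :=
    ⟨htrans x, (hloc x).continuous, (hloc x).isOpenMap⟩
  set φ := e.symm.toContinuousLinearEquiv.toHomeomorph
  have hq : IsOpenQuotientMap (torusProj (n - m) m ∘ φ) :=
    (isOpenQuotientMap_torusProj _ _).comp φ.isOpenQuotientMap
  refine ⟨K, m, by simpa using hb.fintype_card_le_finrank, rfl, hK,
    ⟨K.addEquivOfLinearIndependent hb hspan⟩,
    ⟨hθ.isQuotientMap.homeomorphOfFiberEq hq.isQuotientMap fun s t ↦ ?_⟩⟩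
  rw [AddAction.vadd_eq_vadd_iff_sub_mem_stabilizer, comp_apply, comp_apply,
    torusProj_eq_torusProj_iff]
  simp only [φ, ContinuousLinearEquiv.coe_toHomeomorph, LinearEquiv.coe_toContinuousLinearEquiv']
  rw [← he, ← map_sub, LinearEquiv.apply_symm_apply, hspan]
  rfl

/-- Let the additive group `ℝⁿ` act smoothly and transitively on a connected smooth
`n`-manifold `M` with infinitesimal generators linearly independent at every point
(i.e. the orbit maps are immersive at `0`).  Then the isotropy group of any point is a
discrete subgroup of `ℝⁿ`, hence isomorphic to `ℤᵐ` for some `0 ≤ m ≤ n`, and `M` is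
diffeomorphic (here: homeomorphic, via the smooth orbit map structure) to
`ℝ^{n-m} × Tᵐ`. -/
theorem stmt_4 (n : ℕ) {M : Type*} [TopologicalSpace M]
    [ChartedSpace (EuclideanSpace ℝ (Fin n)) M]
    [IsManifold (𝓡 n) (⊤ : ℕ∞) M] [ConnectedSpace M] [Nonempty M]
    (Φ : (Fin n → ℝ) → M → M)
    (hzero : ∀ x, Φ 0 x = x)
    (hadd : ∀ s t x, Φ (s + t) x = Φ s (Φ t x))
    (hsmooth : ContMDiff ((𝓘(ℝ, Fin n → ℝ)).prod (𝓡 n)) (𝓡 n) (⊤ : ℕ∞)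
      fun p : (Fin n → ℝ) × M => Φ p.1 p.2)
    (htrans : ∀ x y : M, ∃ s, Φ s x = y)
    -- the infinitesimal generators are linearly independent at every point:
    -- each orbit map is immersive at `0`
    (hfree : ∀ x : M, Function.Injective
      (mfderiv 𝓘(ℝ, Fin n → ℝ) (𝓡 n) (fun s => Φ s x) 0)) :
    ∀ x : M, ∃ (K : AddSubgroup (Fin n → ℝ)) (m : ℕ),
      m ≤ n ∧
      (K : Set (Fin n → ℝ)) = {s | Φ s x = x} ∧
      DiscreteTopology K ∧
      Nonempty (K ≃+ (Fin m → ℤ)) ∧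
      Nonempty (M ≃ₜ ((Fin (n - m) → ℝ) × (Fin m → AddCircle (1 : ℝ)))) :=
  stmt_4_general n Φ hzero hadd hsmooth htrans hfree
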